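/- arXiv:2010.07252 — 2 statements merged into one kernel-verified Lean document; each statement's English description precedes it below -/
import Mathlib

section
/- Let S : ℝ^K → ℝ be a convex nonlinear expectation. The following are equivalent: (i) there exists N ∈ ℝ such that S(a) + N ≥ max_i a_i for all a ∈ ℝ^K; (ii) there exists N ∈ ℝ such that the acceptance set 𝒜_S := {a ∈ ℝ^K : S(a) ≤ 0} is contained in (−∞,N]^K; (iii) there exists a bounded function ℋ : Δ^K → ℝ such that S(a) = sup_{u∈Δ^K}(∑_{i=1}^K u_i a_i + ℋ(u)) for all a ∈ ℝ^K; (iv) writing S^λ_max(a) := λS(a/λ), one has sup_{a∈ℝ^K} |S^λ_max(a) − max_i a_i| → 0 as λ ↓ 0. -/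
/-!
Everything runs through (i). Monotonicity and translation equivariance give `S a ≤ max a + S 0`
for free, so (i) says that `S - max` is bounded; rescaling turns this into the uniform
convergence (iv), and (ii) is (i) read on the level set `S = 0`. For (iii) take
`ℋ(u) = inf_b (S b - u·b)`, which is bounded on the simplex under (i). The supremum in the
representation is attained at a subgradient of `S` at `a`; it exists by Hahn–Banach, with the
one-sided directional derivative of `S` at `a` as the dominating sublinear functional, and it is a
probability vector because `S` is monotone and translation equivariant. Conversely, evaluating the
representation at the vertex of the simplex where `a` is maximal gives (i).
-/

noncomputable section

namespace ARC

/-- The maximum of a vector `a : Fin K → ℝ` (needs `0 < K`). -/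
def fmax {K : ℕ} (hK : 0 < K) (a : Fin K → ℝ) : ℝ :=
  Finset.univ.sup' ⟨⟨0, hK⟩, Finset.mem_univ _⟩ a

/-- A convex nonlinear expectation: monotone, translation equivariant and convex. -/
def IsConvexNonlinearExpectation {K : ℕ} (S : (Fin K → ℝ) → ℝ) : Prop :=
  Monotone S ∧ (∀ (a : Fin K → ℝ) (c : ℝ), S (fun i => a i + c) = S a + c) ∧
    ConvexOn ℝ Set.univ S

end ARC

open Set Filter Topology

section RightLineDeriv

lemma tendsto_mul_const_nhdsGT_zero {c : ℝ} (hc : 0 < c) :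
    Tendsto (· * c) (𝓝[>] (0 : ℝ)) (𝓝[>] 0) :=
  tendsto_nhdsWithin_of_tendsto_nhds_of_eventually_within _
    (by simpa using ((continuous_mul_const c).tendsto 0).mono_left nhdsWithin_le_nhds)
    (eventually_nhdsWithin_of_forall fun _ ht => mul_pos ht hc)

variable {E : Type*} [AddCommGroup E] [Module ℝ E] {f : E → ℝ}

def lineDiffQuot (f : E → ℝ) (a b : E) (t : ℝ) : ℝ := (f (a + t • b) - f a) / t

def rightLineDeriv (f : E → ℝ) (a b : E) : ℝ := sInf (lineDiffQuot f a b '' Ioi 0)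

lemma lineDiffQuot_smul (a b : E) {c : ℝ} (hc : c ≠ 0) (t : ℝ) :
    lineDiffQuot f a (c • b) t = c * lineDiffQuot f a b (t * c) := by
  rw [lineDiffQuot, lineDiffQuot, smul_smul, mul_div_assoc', mul_comm t c,
    mul_div_mul_left _ _ hc]

namespace ConvexOn

lemma lineDiffQuot_mono (hf : ConvexOn ℝ univ f) (a b : E) {s t : ℝ} (hs : s ≠ 0) (ht : t ≠ 0)
    (hst : s ≤ t) : lineDiffQuot f a b s ≤ lineDiffQuot f a b t := by
  have hline : ConvexOn ℝ univ (fun t : ℝ => f (a + t • b)) := by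
    simpa [Function.comp_def, AffineMap.lineMap_apply, add_comm] using
      hf.comp_affineMap (AffineMap.lineMap a (a + b))
  simpa [lineDiffQuot] using hline.secant_mono (mem_univ 0) (mem_univ s) (mem_univ t) hs ht hst

lemma sub_le_lineDiffQuot (hf : ConvexOn ℝ univ f) (a b : E) {t : ℝ} (ht : 0 < t) :
    f a - f (a - b) ≤ lineDiffQuot f a b t := by
  have h := hf.lineDiffQuot_mono a b (s := -1) (by norm_num) ht.ne' (by linarith)
  rwa [lineDiffQuot, neg_one_smul, ← sub_eq_add_neg, div_neg, div_one, neg_sub] at h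

lemma bddBelow_lineDiffQuot_image (hf : ConvexOn ℝ univ f) (a b : E) :
    BddBelow (lineDiffQuot f a b '' Ioi 0) :=
  ⟨f a - f (a - b), by rintro _ ⟨t, ht, rfl⟩; exact hf.sub_le_lineDiffQuot a b ht⟩

lemma tendsto_lineDiffQuot (hf : ConvexOn ℝ univ f) (a b : E) :
    Tendsto (lineDiffQuot f a b) (𝓝[>] 0) (𝓝 (rightLineDeriv f a b)) :=
  MonotoneOn.tendsto_nhdsGT
    (fun _ hs _ ht hst => hf.lineDiffQuot_mono a b (ne_of_gt hs) (ne_of_gt ht) hst)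
    (hf.bddBelow_lineDiffQuot_image a b)

lemma rightLineDeriv_le_lineDiffQuot (hf : ConvexOn ℝ univ f) (a b : E) {t : ℝ} (ht : 0 < t) :
    rightLineDeriv f a b ≤ lineDiffQuot f a b t :=
  csInf_le (hf.bddBelow_lineDiffQuot_image a b) (mem_image_of_mem _ ht)

lemma rightLineDeriv_smul (hf : ConvexOn ℝ univ f) (a b : E) {c : ℝ} (hc : 0 < c) :
    rightLineDeriv f a (c • b) = c * rightLineDeriv f a b := by
  refine tendsto_nhds_unique (hf.tendsto_lineDiffQuot a (c • b)) ?_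
  rw [show lineDiffQuot f a (c • b) = fun t => c * lineDiffQuot f a b (t * c) from
    funext (lineDiffQuot_smul a b hc.ne')]
  exact ((hf.tendsto_lineDiffQuot a b).comp (tendsto_mul_const_nhdsGT_zero hc)).const_mul c

lemma lineDiffQuot_add_le (hf : ConvexOn ℝ univ f) (a b b' : E) {t : ℝ} (ht : 0 < t) :
    lineDiffQuot f a (b + b') t ≤ lineDiffQuot f a b (t * 2) + lineDiffQuot f a b' (t * 2) := by
  have hmid : a + t • (b + b') =
      (1 / 2 : ℝ) • (a + (t * 2) • b) + (1 / 2 : ℝ) • (a + (t * 2) • b') := by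
    module
  have hconv := hf.2 (mem_univ (a + (t * 2) • b)) (mem_univ (a + (t * 2) • b'))
    (by norm_num : (0 : ℝ) ≤ 1 / 2) (by norm_num : (0 : ℝ) ≤ 1 / 2) (by norm_num)
  rw [← hmid, smul_eq_mul, smul_eq_mul] at hconv
  simp only [lineDiffQuot]
  rw [← add_div, div_le_div_iff₀ ht (by positivity)]
  nlinarith

lemma rightLineDeriv_add_le (hf : ConvexOn ℝ univ f) (a b b' : E) :
    rightLineDeriv f a (b + b') ≤ rightLineDeriv f a b + rightLineDeriv f a b' := by
  have hdouble := tendsto_mul_const_nhdsGT_zero (by norm_num : (0 : ℝ) < 2)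
  exact le_of_tendsto_of_tendsto (hf.tendsto_lineDiffQuot a (b + b'))
    (((hf.tendsto_lineDiffQuot a b).comp hdouble).add
      ((hf.tendsto_lineDiffQuot a b').comp hdouble))
    (eventually_nhdsWithin_of_forall fun _ ht => hf.lineDiffQuot_add_le a b b' ht)

theorem exists_linearMap_le_sub (hf : ConvexOn ℝ univ f) (a : E) :
    ∃ g : E →ₗ[ℝ] ℝ, ∀ b, g b ≤ f (a + b) - f a := by
  obtain ⟨g, -, hg⟩ := exists_extension_of_le_sublinear (LinearMap.toPMap 0 ⊥)
    (rightLineDeriv f a) (fun c hc b => hf.rightLineDeriv_smul a b hc) (hf.rightLineDeriv_add_le a)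
    (by
      rintro ⟨x, hx⟩
      obtain rfl : x = 0 := (Submodule.mem_bot ℝ).1 hx
      have h := hf.rightLineDeriv_smul a 0 two_pos
      rw [smul_zero] at h
      show (0 : ℝ) ≤ _
      linarith)
  refine ⟨g, fun b => (hg b).trans ?_⟩
  simpa [lineDiffQuot] using hf.rightLineDeriv_le_lineDiffQuot a b one_pos

end ConvexOn

end RightLineDeriv

namespace ARC

variable {K : ℕ} (hK : 0 < K)

lemma le_fmax (a : Fin K → ℝ) (i : Fin K) : a i ≤ fmax hK a :=
  Finset.le_sup' a (Finset.mem_univ i)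

lemma fmax_le {a : Fin K → ℝ} {c : ℝ} (h : ∀ i, a i ≤ c) : fmax hK a ≤ c :=
  Finset.sup'_le _ a fun i _ => h i

lemma exists_fmax_eq (a : Fin K → ℝ) : ∃ j, fmax hK a = a j := by
  obtain ⟨j, -, hj⟩ := Finset.exists_mem_eq_sup' _ a
  exact ⟨j, hj⟩

lemma fmax_smul {c : ℝ} (hc : 0 ≤ c) (a : Fin K → ℝ) : fmax hK (c • a) = c * fmax hK a :=
  (Finset.apply_sup'_eq_sup'_comp _ _ (monotone_mul_left_of_nonneg hc).map_sup).symm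

lemma sum_mul_le_fmax (u : stdSimplex ℝ (Fin K)) (a : Fin K → ℝ) :
    ∑ i, u i * a i ≤ fmax hK a :=
  calc ∑ i, u i * a i ≤ ∑ i, u i * fmax hK a :=
        Finset.sum_le_sum fun i _ =>
          mul_le_mul_of_nonneg_left (le_fmax hK a i) (stdSimplex.zero_le u i)
    _ = fmax hK a := by rw [← Finset.sum_mul, stdSimplex.sum_eq_one u, one_mul]

namespace IsConvexNonlinearExpectation

variable {S : (Fin K → ℝ) → ℝ} (hS : IsConvexNonlinearExpectation S)
include hS

lemma apply_le_fmax_add (a : Fin K → ℝ) : S a ≤ fmax hK a + S 0 := by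
  obtain ⟨hmono, htrans, -⟩ := hS
  have h := hmono (show a ≤ fun _ => 0 + fmax hK a from fun i => by simpa using le_fmax hK a i)
  rwa [htrans, add_comm] at h

lemma abs_sub_fmax_le {N : ℝ} (hN : ∀ a, fmax hK a ≤ S a + N) (a : Fin K → ℝ) :
    |S a - fmax hK a| ≤ max N (S 0) :=
  abs_le.2 ⟨by linarith [hN a, le_max_left N (S 0)],
    by linarith [hS.apply_le_fmax_add hK a, le_max_right N (S 0)]⟩

lemma fmax_le_add_of_acceptance_le {N : ℝ} (hN : ∀ a : Fin K → ℝ, S a ≤ 0 → ∀ i, a i ≤ N)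
    (a : Fin K → ℝ) : fmax hK a ≤ S a + N := by
  obtain ⟨-, htrans, -⟩ := hS
  refine fmax_le hK fun i => ?_
  have h := hN (fun j => a j + -S a) (by rw [htrans, add_neg_cancel]) i
  linarith

theorem exists_subgradient_mem_stdSimplex (a : Fin K → ℝ) :
    ∃ u ∈ stdSimplex ℝ (Fin K), ∀ b, S a - ∑ i, u i * a i ≤ S b - ∑ i, u i * b i := by
  obtain ⟨hmono, htrans, hconv⟩ := hS
  obtain ⟨g, hg⟩ := hconv.exists_linearMap_le_sub a
  set e : Fin K → Fin K → ℝ := fun i j => if i = j then 1 else 0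
  set u : Fin K → ℝ := fun i => g (e i)
  have hg_eq : ∀ b, g b = ∑ i, u i * b i := fun b => by
    rw [g.pi_apply_eq_sum_univ b]
    simp only [smul_eq_mul, mul_comm, u, e]
  have hconst : ∀ c : ℝ, g (fun _ => c) ≤ c := fun c => by
    have h := hg (fun _ => c)
    rw [show a + (fun _ => c) = fun i => a i + c from rfl, htrans] at h
    linarith
  refine ⟨u, ⟨fun i => ?_, ?_⟩, fun b => ?_⟩
  · have hle : a + -e i ≤ a := fun j => by
      by_cases hij : i = j <;> simp [e, hij]
    have h := (hg (-e i)).trans (sub_nonpos.2 (hmono hle))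
    rwa [map_neg, neg_nonpos] at h
  · have hone := hconst 1
    have hneg_one := hconst (-1)
    rw [show (fun _ => (-1 : ℝ)) = -fun _ => 1 from rfl, map_neg] at hneg_one
    simpa [hg_eq] using le_antisymm hone (by linarith)
  · have h := hg (b - a)
    rw [add_sub_cancel, map_sub, hg_eq, hg_eq] at h
    linarith

end IsConvexNonlinearExpectation

/-- The paper's `ℋ`, i.e. minus the convex conjugate of `S`. Where `b ↦ S b - ∑ i, u i * b i` is unbounded below the
infimum takes the junk value `0`; on the simplex this cannot happen once `S` dominates `fmax`
up to a constant. -/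
def penalty (S : (Fin K → ℝ) → ℝ) (u : Fin K → ℝ) : ℝ :=
  ⨅ b, (S b - ∑ i, u i * b i)

section Penalty

variable {hK} {S : (Fin K → ℝ) → ℝ} {N : ℝ} (hN : ∀ a, fmax hK a ≤ S a + N)
  (u : stdSimplex ℝ (Fin K))
include hN

lemma bddBelow_range_sub_sum_mul : BddBelow (range fun b => S b - ∑ i, u i * b i) :=
  ⟨-N, by rintro _ ⟨b, rfl⟩; linarith [hN b, sum_mul_le_fmax hK u b]⟩

lemma penalty_le (b : Fin K → ℝ) : penalty S u ≤ S b - ∑ i, u i * b i :=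
  ciInf_le (bddBelow_range_sub_sum_mul hN u) b

lemma neg_le_penalty : -N ≤ penalty S u :=
  le_ciInf fun b => by linarith [hN b, sum_mul_le_fmax hK u b]

lemma abs_penalty_le : |penalty S u| ≤ max N (S 0) := by
  have h := penalty_le hN u 0
  simp only [Pi.zero_apply, mul_zero, Finset.sum_const_zero, sub_zero] at h
  exact abs_le.2 ⟨by linarith [neg_le_penalty hN u, le_max_left N (S 0)],
    h.trans (le_max_right N (S 0))⟩

end Penalty

theorem IsConvexNonlinearExpectation.eq_iSup_penalty {S : (Fin K → ℝ) → ℝ}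
    (hS : IsConvexNonlinearExpectation S) {N : ℝ} (hN : ∀ a, fmax hK a ≤ S a + N)
    (a : Fin K → ℝ) :
    S a = ⨆ u : stdSimplex ℝ (Fin K), (∑ i, (u : Fin K → ℝ) i * a i + penalty S u) := by
  have hterm_le (u : stdSimplex ℝ (Fin K)) :
      ∑ i, (u : Fin K → ℝ) i * a i + penalty S u ≤ S a := by
    linarith [penalty_le hN u a]
  obtain ⟨u, hu, hsub⟩ := hS.exists_subgradient_mem_stdSimplex a
  have : Nonempty (stdSimplex ℝ (Fin K)) := ⟨⟨u, hu⟩⟩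
  refine le_antisymm ?_ (ciSup_le hterm_le)
  have hattained : S a - ∑ i, u i * a i ≤ penalty S u := le_ciInf hsub
  calc S a ≤ ∑ i, u i * a i + penalty S u := by linarith
    _ ≤ _ := le_ciSup ⟨S a, forall_mem_range.2 hterm_le⟩ ⟨u, hu⟩

lemma fmax_le_add_of_eq_iSup {S : (Fin K → ℝ) → ℝ} {Ent : (Fin K → ℝ) → ℝ} {C : ℝ}
    (hC : ∀ u ∈ stdSimplex ℝ (Fin K), |Ent u| ≤ C)
    (hrep : ∀ a, S a = ⨆ u : stdSimplex ℝ (Fin K), (∑ i, (u : Fin K → ℝ) i * a i + Ent u))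
    (a : Fin K → ℝ) : fmax hK a ≤ S a + C := by
  have hC' (u : stdSimplex ℝ (Fin K)) : |Ent u| ≤ C := hC u u.2
  obtain ⟨j, hj⟩ := exists_fmax_eq hK a
  have hbdd : BddAbove (range fun u : stdSimplex ℝ (Fin K) =>
      ∑ i, (u : Fin K → ℝ) i * a i + Ent u) :=
    ⟨fmax hK a + C, forall_mem_range.2 fun u => by
      linarith [sum_mul_le_fmax hK u a, (abs_le.1 (hC' u)).2]⟩
  have hvertex := le_ciSup hbdd (stdSimplex.vertex j)
  simp only [stdSimplex.vertex_coe, Pi.single_apply, ite_mul, one_mul, zero_mul,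
    Finset.sum_ite_eq', Finset.mem_univ, if_true] at hvertex
  have hCj := hC' (stdSimplex.vertex j)
  rw [stdSimplex.vertex_coe] at hCj
  rw [hrep a, hj]
  linarith [(abs_le.1 hCj).1]

lemma abs_smul_sub_fmax_le {S : (Fin K → ℝ) → ℝ} {C : ℝ} (hC : ∀ a, |S a - fmax hK a| ≤ C)
    {lam : ℝ} (hlam : 0 < lam) (a : Fin K → ℝ) :
    |lam * S (lam⁻¹ • a) - fmax hK a| ≤ lam * C := by
  have h := hC (lam⁻¹ • a)
  rwa [fmax_smul hK (inv_nonneg.2 hlam.le), ← mul_le_mul_iff_of_pos_left hlam,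
    ← abs_of_pos hlam, ← abs_mul, abs_of_pos hlam, mul_sub, ← mul_assoc,
    mul_inv_cancel₀ hlam.ne', one_mul] at h

lemma fmax_le_add_of_abs_smul_sub_le {S : (Fin K → ℝ) → ℝ} {lam ε : ℝ} (hlam : 0 < lam)
    (h : ∀ a, |lam * S (lam⁻¹ • a) - fmax hK a| ≤ ε) (a : Fin K → ℝ) :
    fmax hK a ≤ S a + ε / lam := by
  have ha := (abs_le.1 (h (lam • a))).1
  rw [inv_smul_smul₀ hlam.ne', fmax_smul hK hlam.le] at ha
  rw [← sub_le_iff_le_add', le_div_iff₀ hlam]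
  linarith

end ARC

/-- Theorem 5.4: for a convex nonlinear expectation `S`, the following are equivalent:
(i) `S + N` dominates the max; (ii) the acceptance set is contained in `(-∞,N]^K`;
(iii) `S` is represented by a bounded entropy on the simplex; (iv) `λS(·/λ)` converges
uniformly to the max as `λ ↓ 0`. -/
theorem ARC.equivalence_to_boundedness {K : ℕ} (hK : 0 < K)
    (S : (Fin K → ℝ) → ℝ) (hS : ARC.IsConvexNonlinearExpectation S) :
    List.TFAE
      [∃ N : ℝ, ∀ a : Fin K → ℝ, ARC.fmax hK a ≤ S a + N,
       ∃ N : ℝ, ∀ a : Fin K → ℝ, S a ≤ 0 → ∀ i, a i ≤ N,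
       ∃ Ent : (Fin K → ℝ) → ℝ, (∃ C : ℝ, ∀ u ∈ stdSimplex ℝ (Fin K), |Ent u| ≤ C) ∧
         ∀ a, S a = ⨆ u : stdSimplex ℝ (Fin K), (∑ i, (u : Fin K → ℝ) i * a i + Ent u),
       ∀ ε > (0 : ℝ), ∃ δ > (0 : ℝ), ∀ lam : ℝ, 0 < lam → lam < δ →
         ∀ a : Fin K → ℝ, |lam * S (lam⁻¹ • a) - ARC.fmax hK a| ≤ ε] := by
  tfae_have 1 → 2 := fun ⟨N, hN⟩ =>
    ⟨N, fun a ha i => (le_fmax hK a i).trans (by linarith [hN a])⟩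
  tfae_have 2 → 1 := fun ⟨N, hN⟩ => ⟨N, hS.fmax_le_add_of_acceptance_le hK hN⟩
  tfae_have 1 → 3 := fun ⟨N, hN⟩ =>
    ⟨penalty S, ⟨max N (S 0), fun u hu => abs_penalty_le hN ⟨u, hu⟩⟩, hS.eq_iSup_penalty hK hN⟩
  tfae_have 3 → 1 := fun ⟨_, ⟨C, hC⟩, hrep⟩ => ⟨C, fmax_le_add_of_eq_iSup hK hC hrep⟩
  tfae_have 1 → 4 := by
    rintro ⟨N, hN⟩ ε hε
    have hC := hS.abs_sub_fmax_le hK hN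
    have hC0 : 0 ≤ max N (S 0) := (abs_nonneg _).trans (hC 0)
    refine ⟨ε / (max N (S 0) + 1), by positivity, fun lam hlam hlamδ a => ?_⟩
    calc |lam * S (lam⁻¹ • a) - fmax hK a|
        ≤ lam * max N (S 0) := abs_smul_sub_fmax_le hK hC hlam a
      _ ≤ ε / (max N (S 0) + 1) * (max N (S 0) + 1) := by nlinarith
      _ = ε := div_mul_cancel₀ ε (by positivity)
  tfae_have 4 → 1 := fun h => by
    obtain ⟨δ, hδ, hδ'⟩ := h 1 one_pos
    exact ⟨1 / (δ / 2), fmax_le_add_of_abs_smul_sub_le hK (half_pos hδ)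
      (hδ' _ (half_pos hδ) (half_lt_self hδ))⟩
  tfae_finish
end
end

section
/- Every convex nonlinear expectation S : ℝ^K → ℝ admits the robust representation S(a) = sup_{u∈Δ^K}(∑_{i=1}^K u_i a_i + ℋ_max(u)) for all a ∈ ℝ^K, where ℋ_max(u) := −sup_{a∈𝒜_S} ∑_{i=1}^K u_i a_i is valued in [−∞,∞) and 𝒜_S := {a ∈ ℝ^K : S(a) ≤ 0} is the acceptance set (terms with ℋ_max(u) = −∞ contribute −∞ to the supremum). -/
noncomputable section

namespace ARC

/-- The maximal representing (entropy) function `ℋ_max(u) = -sup_{a ∈ 𝒜_S} ∑ u_i a_i`,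
valued in `[-∞, ∞)` (as an extended real). -/
def Hmax {K : ℕ} (S : (Fin K → ℝ) → ℝ) (u : Fin K → ℝ) : EReal :=
  -(⨆ a : {a : Fin K → ℝ // S a ≤ 0}, ((∑ i, u i * a.1 i : ℝ) : EReal))

end ARC

/-!
A convex function on `ℝ^K` is continuous, so by Hahn–Banach it is the supremum of its affine
minorants `b ↦ ∑ u_i b_i + β`. Monotonicity forces `u ≥ 0` and translation equivariance forces
`∑ u_i = 1`, so `u ∈ Δ^K`; and the intercept of such a minorant is at most `ℋ_max(u)`, since
`∑ u_i b_i ≤ S b - β ≤ -β` on the acceptance set. Conversely `a - S(a)𝟏` is acceptable, which gives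
`∑ u_i a_i + ℋ_max(u) ≤ S(a)` for every `u ∈ Δ^K`.
-/

open Finset

namespace ARC

lemma nonpos_of_forall_mul_le {x C : ℝ} (h : ∀ t, 0 ≤ t → x * t ≤ C) : x ≤ 0 := by
  by_contra! hx
  have := h ((|C| + 1) / x) (by positivity)
  rw [mul_div_cancel₀ _ hx.ne'] at this
  linarith [le_abs_self C]

section Affine

variable {ι : Type*} [Fintype ι] {S : (ι → ℝ) → ℝ}

lemma _root_.ConvexOn.exists_affine_minorant_eq_of_lt (hS : ConvexOn ℝ Set.univ S)
    {a : ι → ℝ} {r : ℝ} (hr : r < S a) :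
    ∃ (u : ι → ℝ) (β : ℝ), (∀ b, ∑ i, u i * b i + β ≤ S b) ∧ ∑ i, u i * a i + β = r := by
  classical
  have hcont : Continuous S := continuousOn_univ.1 (hS.continuousOn isOpen_univ)
  obtain ⟨l, β, hle, heq⟩ := hS.exists_affine_le_of_lt (𝕜 := ℝ) (Set.mem_univ a) hr
    isClosed_univ (hcont.lowerSemicontinuous.lowerSemicontinuousOn _)
  have hl : ∀ b : ι → ℝ, ∑ i, l (Pi.single i 1) * b i = l b := fun b => by
    conv_rhs => rw [← univ_sum_single b, map_sum]
    refine sum_congr rfl fun i _ => ?_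
    rw [mul_comm, ← smul_eq_mul, ← map_smul, ← Pi.single_smul', smul_eq_mul, mul_one]
  refine ⟨fun i => l (Pi.single i 1), β, fun b => ?_, ?_⟩
  · simpa [hl] using hle ⟨b, Set.mem_univ b⟩
  · simpa [hl] using heq

lemma mem_stdSimplex_of_affine_minorant (hmono : Monotone S)
    (htrans : ∀ (a : ι → ℝ) (c : ℝ), S (fun i => a i + c) = S a + c)
    {u : ι → ℝ} {β : ℝ} (h : ∀ b, ∑ i, u i * b i + β ≤ S b) :
    u ∈ stdSimplex ℝ ι := by
  classical
  refine ⟨fun i => ?_, ?_⟩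
  · suffices -u i ≤ 0 by linarith
    refine nonpos_of_forall_mul_le (C := S 0 - β) fun t ht => ?_
    have hb := (h (-Pi.single i t)).trans (hmono (neg_nonpos.2 (Pi.single_nonneg.2 ht)))
    simp only [Pi.neg_apply, Pi.single_apply, mul_neg, mul_ite, mul_zero, sum_neg_distrib,
      sum_ite_eq', mem_univ, if_true] at hb
    linarith
  · have hshift : ∀ t, (∑ i, u i - 1) * t ≤ S 0 - β := fun t => by
      have hb := h (fun i => (0 : ι → ℝ) i + t)
      rw [htrans] at hb
      simp only [Pi.zero_apply, zero_add, ← sum_mul] at hb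
      linarith
    have h₁ := nonpos_of_forall_mul_le fun t _ => hshift t
    have h₂ := nonpos_of_forall_mul_le (x := 1 - ∑ i, u i) (C := S 0 - β) fun t _ => by
      linarith [hshift (-t)]
    linarith

end Affine

section Hmax

variable {K : ℕ} {S : (Fin K → ℝ) → ℝ} {u : Fin K → ℝ}

lemma le_Hmax_of_affine_minorant {β : ℝ} (h : ∀ b, ∑ i, u i * b i + β ≤ S b) :
    (β : EReal) ≤ Hmax S u := by
  rw [Hmax, EReal.le_neg, ← EReal.coe_neg]
  refine iSup_le fun b => EReal.coe_le_coe_iff.2 ?_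
  linarith [h b.1, b.2]

lemma Hmax_le (htrans : ∀ (a : Fin K → ℝ) (c : ℝ), S (fun i => a i + c) = S a + c)
    (hu : ∑ i, u i = 1) (a : Fin K → ℝ) :
    Hmax S u ≤ ((S a - ∑ i, u i * a i : ℝ) : EReal) := by
  have hacc : S (fun i => a i + -S a) ≤ 0 := by rw [htrans]; simp
  have hwit := le_iSup (fun b : {b : Fin K → ℝ // S b ≤ 0} => ((∑ i, u i * b.1 i : ℝ) : EReal))
    ⟨_, hacc⟩
  rw [Hmax, EReal.neg_le, ← EReal.coe_neg]
  convert hwit using 2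
  simp only [mul_add, sum_add_distrib, ← sum_mul, hu]
  ring

end Hmax

end ARC

/-- Theorem A.1 (robust representation): every convex nonlinear expectation satisfies
`S(a) = sup_{u ∈ Δ^K} (∑ u_i a_i + ℋ_max(u))`, where terms with `ℋ_max(u) = -∞`
contribute `-∞` to the supremum (computed in the extended reals). -/
theorem ARC.robust_representation {K : ℕ}
    (S : (Fin K → ℝ) → ℝ) (hS : ARC.IsConvexNonlinearExpectation S) :
    ∀ a : Fin K → ℝ,
      (S a : EReal) =
        ⨆ u : stdSimplex ℝ (Fin K),
          (((∑ i, (u : Fin K → ℝ) i * a i : ℝ) : EReal) + ARC.Hmax S u) := by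
  obtain ⟨hmono, htrans, hconv⟩ := hS
  intro a
  refine le_antisymm (EReal.ge_of_forall_gt_iff_ge.1 fun r hr => ?_) (iSup_le fun u => ?_)
  · obtain ⟨u, β, hminor, hr⟩ := hconv.exists_affine_minorant_eq_of_lt (EReal.coe_lt_coe_iff.1 hr)
    refine le_iSup_of_le ⟨u, ARC.mem_stdSimplex_of_affine_minorant hmono htrans hminor⟩ ?_
    calc (r : EReal) = ((∑ i, u i * a i : ℝ) : EReal) + β := by rw [← hr, EReal.coe_add]
      _ ≤ _ := add_le_add_right (ARC.le_Hmax_of_affine_minorant hminor) _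
  · calc _ ≤ ((∑ i, (u : Fin K → ℝ) i * a i : ℝ) : EReal)
          + ((S a - ∑ i, (u : Fin K → ℝ) i * a i : ℝ) : EReal) :=
          add_le_add_right (ARC.Hmax_le htrans u.2.2 a) _
      _ = S a := by rw [← EReal.coe_add, add_sub_cancel]
end
end
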